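/- arXiv:2308.09491 — 4 statements merged into one kernel-verified Lean document; each statement's English description precedes it below -/
import Mathlib

section
/- Let G be a matching covered graph and C a tight cut of G. An edge e of G is removable in G if and only if e is removable in each C-contraction of G that contains e. -/
open Classical in
/-- A finite multigraph: loops are forbidden, multiple edges are allowed. -/
structure Multigraph where
  V : Type
  E : Type
  [fintV : Fintype V]
  [fintE : Fintype E]
  ends : E → Sym2 V
  no_loops : ∀ e, ¬ (ends e).IsDiag

attribute [instance] Multigraph.fintV Multigraph.fintE

namespace Multigraph

variable (G : Multigraph)

/-- Vertex `v` is incident with edge `e`. -/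
def Inc (v : G.V) (e : G.E) : Prop := v ∈ G.ends e

/-- Adjacency of vertices. -/
def Adj (u v : G.V) : Prop := u ≠ v ∧ ∃ e, G.ends e = s(u, v)

/-- A multigraph is connected. -/
def Connected : Prop := Nonempty G.V ∧ ∀ u v : G.V, Relation.ReflTransGen G.Adj u v

/-- A set of edges is a perfect matching: every vertex is covered exactly once. -/
def IsPerfectMatching (M : Set G.E) : Prop :=
  ∀ v : G.V, ∃! e, e ∈ M ∧ G.Inc v e

/-- Matching covered: nontrivial, connected, every edge lies in a perfect matching. -/
def MatchingCovered : Prop :=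
  2 ≤ Nat.card G.V ∧ G.Connected ∧ ∀ e : G.E, ∃ M, G.IsPerfectMatching M ∧ e ∈ M

/-- Degree of a vertex. -/
noncomputable def degree (v : G.V) : ℕ := Nat.card {e : G.E // G.Inc v e}

/-- Maximum degree `Δ(G)`. -/
noncomputable def maxDegree : ℕ := Finset.univ.sup G.degree

/-- The graph obtained by deleting the edge `e`. -/
noncomputable def deleteEdge (e : G.E) : Multigraph where
  V := G.V
  E := {f : G.E // f ≠ e}
  fintE := Fintype.ofFinite _
  ends f := G.ends f.1
  no_loops f := G.no_loops f.1

/-- An edge of `G` is removable if `G - e` is matching covered. -/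
noncomputable def Removable (e : G.E) : Prop := (G.deleteEdge e).MatchingCovered

/-- The graph obtained by deleting a set of vertices (and all incident edges). -/
noncomputable def deleteVerts (S : Set G.V) : Multigraph where
  V := {v : G.V // v ∉ S}
  E := {e : G.E // ∀ v ∈ G.ends e, v ∉ S}
  fintV := Fintype.ofFinite _
  fintE := Fintype.ofFinite _
  ends e := (G.ends e.1).attachWith e.2
  no_loops e h := G.no_loops e.1 (by
    have := (Sym2.isDiag_map Subtype.val_injective).mpr h
    simpa using this)

/-- Two-connectedness: at least three vertices, and deleting any vertex
leaves a connected graph. -/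
noncomputable def TwoConnected : Prop :=
  3 ≤ Nat.card G.V ∧ ∀ v : G.V, (G.deleteVerts {v}).Connected

/-- Three-connectedness: at least four vertices, and deleting any two distinct
vertices leaves a connected graph. -/
noncomputable def ThreeConnected : Prop :=
  4 ≤ Nat.card G.V ∧ ∀ u v : G.V, u ≠ v → (G.deleteVerts {u, v}).Connected

/-- The cut `∂(X)`: edges with exactly one end in `X`. -/
def cut (X : Set G.V) : Set G.E :=
  {e | ∃ u ∈ X, ∃ w ∈ Xᶜ, G.ends e = s(u, w)}

/-- A tight cut: a cut (with both shores nonempty) met by every perfect matching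
in exactly one edge. -/
def IsTightCut (X : Set G.V) : Prop :=
  X.Nonempty ∧ Xᶜ.Nonempty ∧
    ∀ M : Set G.E, G.IsPerfectMatching M → ∃! e, e ∈ M ∧ e ∈ G.cut X

/-- A cut `∂(X)` is trivial if one of its shores is a singleton. -/
def TrivialShore (X : Set G.V) : Prop := (∃ v, X = {v}) ∨ (∃ v, Xᶜ = {v})

/-- `G` is bipartite. -/
def Bipartite : Prop :=
  ∃ c : G.V → Bool, ∀ (e : G.E) (a b : G.V), G.ends e = s(a, b) → c a ≠ c b

/-- The subgraph of `G` induced by `X` is bipartite. -/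
def BipartiteOn (X : Set G.V) : Prop :=
  ∃ c : G.V → Bool, ∀ (e : G.E) (a b : G.V),
    G.ends e = s(a, b) → a ∈ X → b ∈ X → c a ≠ c b

lemma Sym2.exists_eq_mk {α : Type*} (z : Sym2 α) : ∃ a b, z = s(a, b) := by
  induction z using Sym2.ind with
  | _ x y => exact ⟨x, y, rfl⟩

open Classical in
/-- Contraction `G/X`: the shore `X` is shrunk to a single new vertex.
Edges with both ends in `X` disappear. -/
noncomputable def contract (X : Set G.V) : Multigraph where
  V := {v : G.V // v ∉ X} ⊕ Unit
  E := {e : G.E // ¬ ∀ v ∈ G.ends e, v ∈ X}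
  fintV := Fintype.ofFinite _
  fintE := Fintype.ofFinite _
  ends e := (G.ends e.1).map
    (fun v => if h : v ∈ X then Sum.inr () else Sum.inl ⟨v, h⟩)
  no_loops := by
    rintro ⟨e, he⟩ hdiag
    obtain ⟨a, b, hab⟩ := Sym2.exists_eq_mk (G.ends e)
    have hne : a ≠ b := by
      have := G.no_loops e
      rw [hab, Sym2.mk_isDiag_iff] at this
      exact this
    simp only [hab, Sym2.map_pair_eq, Sym2.mk_isDiag_iff] at hdiag
    by_cases ha : a ∈ X <;> by_cases hb : b ∈ X
    · exact he (by
        rw [hab]; intro v hv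
        rcases Sym2.mem_iff.mp hv with h | h <;> subst h <;> assumption)
    · rw [dif_pos ha, dif_neg hb] at hdiag; simp at hdiag
    · rw [dif_neg ha, dif_pos hb] at hdiag; simp at hdiag
    · rw [dif_neg ha, dif_neg hb] at hdiag
      simp only [Sum.inl.injEq, Subtype.mk.injEq] at hdiag
      exact hne hdiag

/-- A brick: a nonbipartite matching covered graph all of whose tight cuts are
trivial. -/
def IsBrick : Prop :=
  G.MatchingCovered ∧ ¬ G.Bipartite ∧ ∀ X : Set G.V, G.IsTightCut X → G.TrivialShore X

/-- A brace: a bipartite matching covered graph all of whose tight cuts are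
trivial. -/
def IsBrace : Prop :=
  G.MatchingCovered ∧ G.Bipartite ∧ ∀ X : Set G.V, G.IsTightCut X → G.TrivialShore X

/-- `BrickCount G n` holds if some tight cut decomposition of `G` produces
exactly `n` bricks.  (By Lovász's theorem the number `n` is independent of the
decomposition.) -/
inductive BrickCount : (G : Multigraph) → ℕ → Prop
  | brick (G : Multigraph) (h : G.IsBrick) : BrickCount G 1
  | brace (G : Multigraph) (h : G.IsBrace) : BrickCount G 0
  | cut (G : Multigraph) (X : Set G.V) (ht : G.IsTightCut X) (hnt : ¬ G.TrivialShore X)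
      {n m : ℕ} (h1 : BrickCount (G.contract X) n) (h2 : BrickCount (G.contract Xᶜ) m) :
      BrickCount G (n + m)

/-- A near-brick: a matching covered graph whose tight cut decompositions
have exactly one brick. -/
def IsNearBrick : Prop := G.MatchingCovered ∧ BrickCount G 1

/-- A single ear of length at least 3: an odd path of length `k ≥ 3` all of whose
internal vertices have degree two. -/
def HasLongSingleEar : Prop :=
  ∃ (k : ℕ) (v : Fin (k + 1) → G.V) (e : Fin k → G.E),
    Odd k ∧ 3 ≤ k ∧ Function.Injective v ∧ Function.Injective e ∧
    (∀ i : Fin k, G.ends (e i) = s(v i.castSucc, v i.succ)) ∧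
    (∀ i : Fin (k + 1), i ≠ 0 → i ≠ Fin.last k → G.degree (v i) = 2)

/-- Irreducible: no single ear of length three or more. -/
def Irreducible : Prop := ¬ G.HasLongSingleEar

/-- Isomorphism of multigraphs. -/
def IsIso (G H : Multigraph) : Prop :=
  ∃ (φ : G.V ≃ H.V) (ψ : G.E ≃ H.E), ∀ e, H.ends (ψ e) = (G.ends e).map φ

end Multigraph

open Multigraph

/-- The complete graph `K₂`. -/
def K2 : Multigraph where
  V := Fin 2
  E := Unit
  ends _ := s(0, 1)
  no_loops _ := by simp [Sym2.mk_isDiag_iff]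

/-- The complete graph `K₄`. -/
noncomputable def K4 : Multigraph where
  V := Fin 4
  E := {p : Sym2 (Fin 4) // ¬ p.IsDiag}
  fintE := Fintype.ofFinite _
  ends p := p.1
  no_loops p := p.2

/-- The cycle `C₄`. -/
def C4 : Multigraph where
  V := ZMod 4
  E := ZMod 4
  ends i := s(i, i + 1)
  no_loops i := by
    have h : ∀ j : ZMod 4, j ≠ j + 1 := by decide
    simpa [Sym2.mk_isDiag_iff] using h i

/-- `C̄₆`, the complement of the 6-cycle (the triangular prism). -/
noncomputable def C6bar : Multigraph where
  V := ZMod 6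
  E := {p : Sym2 (ZMod 6) // ¬ p.IsDiag ∧ ∀ a b : ZMod 6, p = s(a, b) → b ≠ a + 1 ∧ a ≠ b + 1}
  fintE := Fintype.ofFinite _
  ends p := p.1
  no_loops p := p.2.1

/-!
Since `C = ∂(X)` is tight, every perfect matching of `G` restricts to perfect matchings of
`G/X` and `G/Xᶜ`; conversely, perfect matchings of the two contractions that use the same edge
of `C` glue to a perfect matching of `G`. Hence an edge `f ≠ e` lies in a perfect matching of `G`
avoiding `e` exactly when this holds in the contractions. Connectivity of `G - e` passes to the
contractions, and conversely it follows by a parity argument as soon as some perfect matching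
of `G` avoids `e`.
-/

namespace Multigraph

variable {G : Multigraph}

lemma Adj.of_ends {f : G.E} {u v : G.V} (h : G.ends f = s(u, v)) : G.Adj u v :=
  ⟨fun huv => G.no_loops f (by rw [h, huv]; exact Sym2.mk_isDiag_iff.mpr rfl), f, h⟩

lemma Connected.nonempty_edge (h : G.Connected) (hcard : 2 ≤ Nat.card G.V) : Nonempty G.E := by
  obtain ⟨u, v, huv⟩ := (Finite.one_lt_card_iff_nontrivial.mp hcard).exists_pair_ne
  rcases (h.2 u v).cases_head with rfl | ⟨_, ⟨_, f, _⟩, _⟩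
  · exact absurd rfl huv
  · exact ⟨f⟩

lemma Connected.of_surjective {H : Multigraph} (φ : G.V → H.V) (hφ : Function.Surjective φ)
    (hadj : ∀ u v, G.Adj u v → Relation.ReflTransGen H.Adj (φ u) (φ v)) (hG : G.Connected) :
    H.Connected := by
  refine ⟨hG.1.map φ, fun u' v' => ?_⟩
  obtain ⟨u, rfl⟩ := hφ u'
  obtain ⟨v, rfl⟩ := hφ v'
  exact (hG.2 u v).lift' φ hadj

lemma not_forall_mem_or_not_forall_mem {X Y : Set G.V} (hXY : Disjoint X Y) (e : G.E) :
    (¬ ∀ v ∈ G.ends e, v ∈ X) ∨ ¬ ∀ v ∈ G.ends e, v ∈ Y := by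
  by_contra! h
  have ha := (G.ends e).out_fst_mem
  exact hXY.notMem_of_mem_left (h.1 _ ha) (h.2 _ ha)

section deleteEdge

variable {e : G.E}

lemma IsPerfectMatching.deleteEdge {M : Set G.E} (hM : G.IsPerfectMatching M) (he : e ∉ M) :
    (G.deleteEdge e).IsPerfectMatching (Subtype.val ⁻¹' M) := by
  intro v
  obtain ⟨f, ⟨hfM, hfv⟩, huniq⟩ := hM v
  exact ⟨⟨f, ne_of_mem_of_not_mem hfM he⟩, ⟨hfM, hfv⟩,
    fun g hg => Subtype.ext (huniq g.1 hg)⟩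

lemma IsPerfectMatching.of_deleteEdge {M : Set (G.deleteEdge e).E}
    (hM : (G.deleteEdge e).IsPerfectMatching M) : G.IsPerfectMatching (Subtype.val '' M) := by
  intro v
  obtain ⟨f, ⟨hfM, hfv⟩, huniq⟩ := hM v
  refine ⟨f.1, ⟨⟨f, hfM, rfl⟩, hfv⟩, ?_⟩
  rintro _ ⟨⟨g, hgM, rfl⟩, hgv⟩
  exact congrArg Subtype.val (huniq g ⟨hgM, hgv⟩)

def CoveredAvoiding (H : Multigraph) (S : Set H.E) : Prop :=
  ∀ f ∉ S, ∃ M, H.IsPerfectMatching M ∧ f ∈ M ∧ Disjoint M S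

lemma removable_iff :
    G.Removable e ↔ 2 ≤ Nat.card G.V ∧ (G.deleteEdge e).Connected ∧ G.CoveredAvoiding {e} := by
  refine and_congr_right' (and_congr_right' ⟨fun h f hf => ?_, fun h f => ?_⟩)
  · obtain ⟨M, hM, hfM⟩ := h ⟨f, hf⟩
    exact ⟨_, hM.of_deleteEdge, ⟨_, hfM, rfl⟩,
      Set.disjoint_singleton_right.mpr fun ⟨g, _, hg⟩ => g.2 hg⟩
  · obtain ⟨M, hM, hfM, hMe⟩ := h f.1 f.2
    exact ⟨_, hM.deleteEdge (Set.disjoint_singleton_right.mp hMe), hfM⟩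

lemma Removable.exists_ne (h : G.Removable e) : ∃ f, f ≠ e := by
  obtain ⟨f⟩ := h.2.1.nonempty_edge h.1
  exact ⟨f.1, f.2⟩

end deleteEdge

lemma Adj.symm {u v : G.V} (h : G.Adj u v) : G.Adj v u :=
  ⟨h.1.symm, h.2.imp fun _ hf => hf.trans Sym2.eq_swap⟩

instance (G : Multigraph) : Std.Symm G.Adj := ⟨fun _ _ => Adj.symm⟩

lemma IsPerfectMatching.even_card {M : Set G.E} (hM : G.IsPerfectMatching M) {A : Finset G.V}
    (hA : ∀ f ∈ M, ∀ u ∈ G.ends f, u ∈ A → ∀ w ∈ G.ends f, w ∈ A) : Even A.card := by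
  classical
  choose m hm using fun v => (hM v).exists
  have hfiber : ∀ f ∈ A.image m, (A.filter (m · = f)).card = 2 := by
    simp only [Finset.mem_image]
    rintro _ ⟨u, hu, rfl⟩
    obtain ⟨w, hw⟩ : ∃ w, G.ends (m u) = s(u, w) := ⟨_, (Sym2.other_spec (hm u).2).symm⟩
    have hmem : ∀ v, v ∈ G.ends (m u) ↔ v = u ∨ v = w := by simp [hw]
    have : A.filter (m · = m u) = {u, w} := by
      ext v
      simp only [Finset.mem_filter, Finset.mem_insert, Finset.mem_singleton, ← hmem]
      refine ⟨fun ⟨_, hv⟩ => hv ▸ (hm v).2, fun hv => ⟨hA _ (hm u).1 u (hm u).2 hu v hv, ?_⟩⟩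
      exact (hM v).unique (hm v) ⟨(hm u).1, hv⟩
    rw [this, Finset.card_pair (Adj.of_ends hw).1]
  rw [Finset.card_eq_sum_card_image m A, Finset.sum_congr rfl hfiber, Finset.sum_const,
    smul_eq_mul]
  exact even_two.mul_left _

/-- With `e = ab`, the component of `a` in `G - e` is matched within itself by `M`, and minus `a`
by `N`; by parity it must contain `b`. -/
lemma connected_deleteEdge_of_isPerfectMatching (hG : G.Connected) {e : G.E} {M N : Set G.E}
    (hM : G.IsPerfectMatching M) (heM : e ∉ M) (hN : G.IsPerfectMatching N) (heN : e ∈ N) :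
    (G.deleteEdge e).Connected := by
  classical
  obtain ⟨a, b, hab⟩ := Sym2.exists_eq_mk (G.ends e)
  set A : Finset G.V := {v | Relation.ReflTransGen (G.deleteEdge e).Adj a v}
  suffices hb : b ∈ A by
    refine Connected.of_surjective (G := G) (H := G.deleteEdge e) id Function.surjective_id
      (fun u v huv => ?_) hG
    obtain ⟨hne, f, hf⟩ := huv
    by_cases hfe : f = e
    · subst hfe
      have hab' : Relation.ReflTransGen (G.deleteEdge f).Adj a b := by simpa [A] using hb
      rcases Sym2.eq_iff.mp (hab.symm.trans hf) with ⟨rfl, rfl⟩ | ⟨rfl, rfl⟩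
      · exact hab'
      · exact (Relation.ReflTransGen.stdSymm (r := (G.deleteEdge f).Adj)).symm _ _ hab'
    · exact .single ⟨hne, ⟨f, hfe⟩, hf⟩
  have hclosed : ∀ f ≠ e, ∀ u ∈ G.ends f, u ∈ A → ∀ w ∈ G.ends f, w ∈ A := by
    intro f hfe u hu huA w hw
    rcases eq_or_ne u w with rfl | huw
    · exact huA
    have hf : (G.deleteEdge e).ends ⟨f, hfe⟩ = s(u, w) := (Sym2.mem_and_mem_iff huw).mp ⟨hu, hw⟩
    simp only [A, Finset.mem_filter, Finset.mem_univ, true_and] at huA ⊢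
    exact huA.tail (Adj.of_ends hf)
  by_contra hb
  have haA : a ∈ A := by simpa [A] using Relation.ReflTransGen.refl
  have hA : Even A.card := hM.even_card fun f hf => hclosed f (ne_of_mem_of_not_mem hf heM)
  have hA' : Even (A.erase a).card := by
    refine hN.even_card fun f hf u hu huA w hw => ?_
    obtain ⟨hua, huA⟩ := Finset.mem_erase.mp huA
    have hfe : f ≠ e := by
      rintro rfl
      rcases Sym2.mem_iff.mp (hab ▸ hu) with rfl | rfl
      exacts [hua rfl, hb huA]
    refine Finset.mem_erase.mpr ⟨fun hwa => hfe ?_, hclosed f hfe u hu huA w hw⟩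
    exact (hN a).unique ⟨hf, hwa ▸ hw⟩ ⟨heN, by simp [Inc, hab]⟩
  rw [← Finset.card_erase_add_one haA, Nat.even_add_one] at hA
  exact hA hA'

section contract

variable {X Y : Set G.V} {e : G.E}

open Classical in
noncomputable def toContract (X : Set G.V) (v : G.V) : (G.contract X).V :=
  if h : v ∈ X then .inr () else .inl ⟨v, h⟩

lemma toContract_of_mem {v : G.V} (hv : v ∈ X) : G.toContract X v = .inr () := dif_pos hv

lemma toContract_of_notMem {v : G.V} (hv : v ∉ X) : G.toContract X v = .inl ⟨v, hv⟩ :=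
  dif_neg hv

lemma toContract_surjective (hX : X.Nonempty) : Function.Surjective (G.toContract X) := by
  rintro (⟨v, hv⟩ | ⟨⟩)
  · exact ⟨v, toContract_of_notMem hv⟩
  · exact ⟨hX.some, toContract_of_mem hX.some_mem⟩

lemma toContract_eq_inl_iff {u v : G.V} {hv : v ∉ X} :
    G.toContract X u = .inl ⟨v, hv⟩ ↔ u = v := by
  by_cases hu : u ∈ X
  · rw [toContract_of_mem hu]
    exact iff_of_false Sum.inr_ne_inl (by rintro rfl; exact hv hu)
  · rw [toContract_of_notMem hu]
    exact ⟨fun h => congrArg Subtype.val (Sum.inl_injective h), by rintro rfl; rfl⟩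

lemma toContract_eq_inr_iff {u : G.V} : G.toContract X u = .inr () ↔ u ∈ X := by
  by_cases hu : u ∈ X
  · exact iff_of_true (toContract_of_mem hu) hu
  · rw [toContract_of_notMem hu]
    exact iff_of_false Sum.inl_ne_inr hu

lemma inc_contract_inl_iff {v : G.V} {hv : v ∉ X} {f : (G.contract X).E} :
    (G.contract X).Inc (.inl ⟨v, hv⟩) f ↔ G.Inc v f.1 := by
  refine (Sym2.mem_map (f := G.toContract X)).trans ?_
  simp only [toContract_eq_inl_iff, exists_eq_right, Inc]

lemma not_forall_mem_of_mem_cut {f : G.E} (hf : f ∈ G.cut X) : ¬ ∀ v ∈ G.ends f, v ∈ X :=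
  fun hX => let ⟨u, _, w, hw, hf⟩ := hf; hw (hX w (hf ▸ Sym2.mem_mk_right u w))

lemma val_mem_cut_of_mem {f : (G.contract X).E} {u : G.V} (hu : u ∈ G.ends f.1)
    (huX : u ∈ X) : f.1 ∈ G.cut X := by
  obtain ⟨w, hw, hwX⟩ := not_forall₂.mp f.2
  exact ⟨u, huX, w, hwX, (Sym2.mem_and_mem_iff (ne_of_mem_of_not_mem huX hwX)).mp ⟨hu, hw⟩⟩

lemma inc_contract_inr_iff {f : (G.contract X).E} :
    (G.contract X).Inc (.inr ()) f ↔ f.1 ∈ G.cut X := by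
  refine (Sym2.mem_map (f := G.toContract X)).trans ?_
  simp only [toContract_eq_inr_iff]
  refine ⟨fun ⟨u, hu, huX⟩ => val_mem_cut_of_mem hu huX, ?_⟩
  rintro ⟨u, huX, w, -, hf⟩
  exact ⟨u, hf ▸ Sym2.mem_mk_left u w, huX⟩

lemma cut_compl (X : Set G.V) : G.cut Xᶜ = G.cut X := by
  have key : ∀ Y : Set G.V, G.cut Yᶜ ⊆ G.cut Y := fun Y f ⟨u, hu, w, hw, hf⟩ =>
    ⟨w, not_not.mp hw, u, hu, hf.trans Sym2.eq_swap⟩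
  exact (key X).antisymm (by simpa using key Xᶜ)

lemma IsTightCut.compl (ht : G.IsTightCut X) : G.IsTightCut Xᶜ :=
  ⟨ht.2.1, by simpa using ht.1, by simpa [cut_compl] using ht.2.2⟩

lemma two_le_card_contract (hX : Xᶜ.Nonempty) : 2 ≤ Nat.card (G.contract X).V := by
  obtain ⟨w, hw⟩ := hX
  have : Nontrivial (G.contract X).V := ⟨⟨.inl ⟨w, hw⟩, .inr (), Sum.inl_ne_inr⟩⟩
  exact Finite.one_lt_card

lemma IsPerfectMatching.contract (ht : G.IsTightCut X) {M : Set G.E}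
    (hM : G.IsPerfectMatching M) : (G.contract X).IsPerfectMatching (Subtype.val ⁻¹' M) := by
  rintro (⟨v, hv⟩ | ⟨⟩)
  · obtain ⟨f, ⟨hfM, hfv⟩, huniq⟩ := hM v
    refine ⟨⟨f, fun h => hv (h v hfv)⟩, ⟨hfM, inc_contract_inl_iff.mpr hfv⟩, ?_⟩
    rintro g ⟨hgM, hgv⟩
    exact Subtype.ext (huniq g.1 ⟨hgM, inc_contract_inl_iff.mp hgv⟩)
  · obtain ⟨g, ⟨hgM, hg⟩, huniq⟩ := ht.2.2 M hM
    refine ⟨⟨g, not_forall_mem_of_mem_cut hg⟩, ⟨hgM, inc_contract_inr_iff.mpr hg⟩, ?_⟩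
    rintro f ⟨hfM, hf⟩
    exact Subtype.ext (huniq f.1 ⟨hfM, inc_contract_inr_iff.mp hf⟩)

lemma cut_eq_of_isCompl (hXY : IsCompl X Y) : G.cut Y = G.cut X :=
  hXY.compl_eq ▸ cut_compl X

lemma Connected.contract_deleteEdge (hX : X.Nonempty) (he : ¬ ∀ v ∈ G.ends e, v ∈ X)
    (h : (G.deleteEdge e).Connected) : ((G.contract X).deleteEdge ⟨e, he⟩).Connected := by
  refine Connected.of_surjective (G := G.deleteEdge e) (G.toContract X)
    (toContract_surjective hX) (fun u v ⟨_, f, hf⟩ => ?_) h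
  replace hf : G.ends f.1 = s(u, v) := hf
  by_cases hfX : ∀ w ∈ G.ends f.1, w ∈ X
  · rw [toContract_of_mem (hfX u (hf ▸ Sym2.mem_mk_left u v)),
      toContract_of_mem (hfX v (hf ▸ Sym2.mem_mk_right u v))]
    exact .refl
  · let f' : ((G.contract X).deleteEdge ⟨e, he⟩).E :=
      ⟨⟨f.1, hfX⟩, fun h => f.2 (congrArg Subtype.val h)⟩
    exact .single (Adj.of_ends (f := f') (congrArg (Sym2.map (G.toContract X)) hf))

lemma Removable.contract (ht : G.IsTightCut X) (hrem : G.Removable e)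
    (he : ¬ ∀ v ∈ G.ends e, v ∈ X) : (G.contract X).Removable ⟨e, he⟩ := by
  obtain ⟨-, hconn, hcov⟩ := removable_iff.mp hrem
  refine removable_iff.mpr
    ⟨two_le_card_contract ht.2.1, hconn.contract_deleteEdge ht.1 he, fun f hf => ?_⟩
  obtain ⟨M, hM, hfM, hMe⟩ := hcov f.1 fun h => hf (Subtype.ext h)
  have heM : e ∉ M := Set.disjoint_singleton_right.mp hMe
  exact ⟨_, hM.contract ht, hfM, Set.disjoint_singleton_right.mpr heM⟩

lemma coveredAvoiding_contract (hG : G.MatchingCovered) (ht : G.IsTightCut X)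
    (hrem : ∀ he : ¬ ∀ v ∈ G.ends e, v ∈ X, (G.contract X).Removable ⟨e, he⟩) :
    (G.contract X).CoveredAvoiding (Subtype.val ⁻¹' {e}) := by
  by_cases he : ∀ v ∈ G.ends e, v ∈ X
  · intro f _
    obtain ⟨M, hM, hfM⟩ := hG.2.2 f.1
    refine ⟨_, hM.contract ht, hfM, Set.disjoint_left.mpr fun g _ hg => g.2 ?_⟩
    rwa [show g.1 = e from hg]
  · have : Subtype.val ⁻¹' {e} = ({⟨e, he⟩} : Set (G.contract X).E) := by
      ext
      exact ⟨fun h => Subtype.ext h, fun h => congrArg Subtype.val h⟩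
    exact this ▸ (removable_iff.mp (hrem he)).2.2

/-- On the `Xᶜ` side, an edge of `M₂` at `v` is `M₂`'s edge at the contracted vertex, i.e. the
shared cut edge `g`, which `M₁` already uses at `v`. -/
lemma existsUnique_mem_union_inc (hXY : IsCompl X Y) {M₁ : Set (G.contract X).E}
    {M₂ : Set (G.contract Y).E} (hM₁ : (G.contract X).IsPerfectMatching M₁)
    (hM₂ : (G.contract Y).IsPerfectMatching M₂) {g : G.E} (hg : g ∈ G.cut X)
    (hg₁ : g ∈ Subtype.val '' M₁) (hg₂ : g ∈ Subtype.val '' M₂) {v : G.V} (hv : v ∉ X) :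
    ∃! f, f ∈ Subtype.val '' M₁ ∪ Subtype.val '' M₂ ∧ G.Inc v f := by
  obtain ⟨f₁, ⟨hf₁M, hf₁v⟩, huniq₁⟩ := hM₁ (.inl ⟨v, hv⟩)
  refine ⟨f₁.1, ⟨.inl ⟨f₁, hf₁M, rfl⟩, inc_contract_inl_iff.mp hf₁v⟩, ?_⟩
  rintro _ ⟨⟨f, hfM, rfl⟩ | ⟨f, hfM, rfl⟩, hfv⟩
  · exact congrArg Subtype.val (huniq₁ f ⟨hfM, inc_contract_inl_iff.mpr hfv⟩)
  · obtain ⟨g₂, hg₂M, rfl⟩ := hg₂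
    have hfg : f = g₂ := (hM₂ (.inr ())).unique
      ⟨hfM, inc_contract_inr_iff.mpr (val_mem_cut_of_mem hfv (hXY.compl_eq ▸ hv))⟩
      ⟨hg₂M, inc_contract_inr_iff.mpr (cut_eq_of_isCompl hXY ▸ hg)⟩
    subst hfg
    obtain ⟨g₁, hg₁M, hg₁⟩ := hg₁
    rw [← hg₁, huniq₁ g₁ ⟨hg₁M, inc_contract_inl_iff.mpr (hg₁ ▸ hfv)⟩]

lemma isPerfectMatching_union (hXY : IsCompl X Y) {M₁ : Set (G.contract X).E}
    {M₂ : Set (G.contract Y).E} (hM₁ : (G.contract X).IsPerfectMatching M₁)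
    (hM₂ : (G.contract Y).IsPerfectMatching M₂) {g : G.E} (hg : g ∈ G.cut X)
    (hg₁ : g ∈ Subtype.val '' M₁) (hg₂ : g ∈ Subtype.val '' M₂) :
    G.IsPerfectMatching (Subtype.val '' M₁ ∪ Subtype.val '' M₂) := by
  intro v
  by_cases hv : v ∈ X
  · rw [Set.union_comm]
    exact existsUnique_mem_union_inc hXY.symm hM₂ hM₁ (cut_eq_of_isCompl hXY ▸ hg) hg₂ hg₁
      (hXY.disjoint.notMem_of_mem_left hv)
  · exact existsUnique_mem_union_inc hXY hM₁ hM₂ hg hg₁ hg₂ hv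

lemma exists_isPerfectMatching_of_contract (hXY : IsCompl X Y)
    (h₁ : (G.contract X).CoveredAvoiding (Subtype.val ⁻¹' {e}))
    (h₂ : (G.contract Y).CoveredAvoiding (Subtype.val ⁻¹' {e}))
    {f : G.E} (hf : ¬ ∀ v ∈ G.ends f, v ∈ X) (hfe : f ≠ e) :
    ∃ M, G.IsPerfectMatching M ∧ f ∈ M ∧ Disjoint M {e} := by
  obtain ⟨M₁, hM₁, hfM₁, hM₁e⟩ := h₁ ⟨f, hf⟩ hfe
  obtain ⟨g, ⟨hgM₁, hgX⟩, -⟩ := hM₁ (.inr ())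
  replace hgX := inc_contract_inr_iff.mp hgX
  obtain ⟨M₂, hM₂, hgM₂, hM₂e⟩ :=
    h₂ ⟨g.1, not_forall_mem_of_mem_cut (cut_eq_of_isCompl hXY ▸ hgX)⟩
      (Set.disjoint_left.mp hM₁e hgM₁)
  refine ⟨_, isPerfectMatching_union hXY hM₁ hM₂ hgX ⟨g, hgM₁, rfl⟩ ⟨_, hgM₂, rfl⟩,
    .inl ⟨_, hfM₁, rfl⟩, Set.disjoint_singleton_right.mpr ?_⟩
  rintro (⟨h, hh, rfl⟩ | ⟨h, hh, rfl⟩)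
  exacts [Set.disjoint_left.mp hM₁e hh rfl, Set.disjoint_left.mp hM₂e hh rfl]

lemma coveredAvoiding_of_contract (hXY : IsCompl X Y)
    (h₁ : (G.contract X).CoveredAvoiding (Subtype.val ⁻¹' {e}))
    (h₂ : (G.contract Y).CoveredAvoiding (Subtype.val ⁻¹' {e})) :
    G.CoveredAvoiding {e} := fun f hfe => by
  rcases not_forall_mem_or_not_forall_mem hXY.disjoint f with hf | hf
  exacts [exists_isPerfectMatching_of_contract hXY h₁ h₂ hf hfe,
    exists_isPerfectMatching_of_contract hXY.symm h₂ h₁ hf hfe]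

end contract

end Multigraph

/-- An edge `e` of a matching covered graph `G` is removable iff it is removable
in each `C`-contraction of `G` that contains it, for a tight cut `C = ∂(X)`. -/
theorem removable_iff_removable_in_tight_cut_contractions
    (G : Multigraph) (hG : G.MatchingCovered) (X : Set G.V) (ht : G.IsTightCut X)
    (e : G.E) :
    G.Removable e ↔
      ((∀ he : ¬ ∀ v ∈ G.ends e, v ∈ X, (G.contract X).Removable ⟨e, he⟩) ∧
       (∀ he : ¬ ∀ v ∈ G.ends e, v ∈ Xᶜ, (G.contract Xᶜ).Removable ⟨e, he⟩)) := by
  refine ⟨fun hrem => ⟨hrem.contract ht, hrem.contract ht.compl⟩, fun ⟨hrem₁, hrem₂⟩ => ?_⟩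
  have hcov : G.CoveredAvoiding {e} := coveredAvoiding_of_contract isCompl_compl
    (coveredAvoiding_contract hG ht hrem₁) (coveredAvoiding_contract hG ht.compl hrem₂)
  obtain ⟨f, hfe⟩ : ∃ f, f ≠ e := by
    rcases not_forall_mem_or_not_forall_mem disjoint_compl_right e with he | he
    · obtain ⟨f, hf⟩ := (hrem₁ he).exists_ne
      exact ⟨f.1, fun h => hf (Subtype.ext h)⟩
    · obtain ⟨f, hf⟩ := (hrem₂ he).exists_ne
      exact ⟨f.1, fun h => hf (Subtype.ext h)⟩
  obtain ⟨M, hM, -, hMe⟩ := hcov f hfe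
  obtain ⟨N, hN, heN⟩ := hG.2.2 e
  have hconn := connected_deleteEdge_of_isPerfectMatching hG.2.1 hM
    (Set.disjoint_singleton_right.mp hMe) hN heN
  exact removable_iff.mpr ⟨hG.1, hconn, hcov⟩
end

section
/- Let G be a graph and H a bisubdivision of G at an edge e (H is obtained by replacing e by an odd path of length at least 3). If H is matching covered, then G is matching covered. -/
open Multigraph

namespace Multigraph

/-- Data witnessing that `H` is a bisubdivision of `G` at the edge `e = uv`:
`H` is obtained from `G` by replacing `e` by an odd path `p 0, p 1, …, p k`
(`k ≥ 3` odd) from `u` to `v` whose internal vertices are new vertices of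
degree two in `H`; the other vertices and edges of `G` are carried over by the
injections `φ` and `ψ`. -/
structure BisubWitness (H G : Multigraph) (e : G.E) where
  u : G.V
  v : G.V
  k : ℕ
  φ : G.V → H.V
  ψ : {f : G.E // f ≠ e} → H.E
  p : Fin (k + 1) → H.V
  q : Fin k → H.E
  ends_e : G.ends e = s(u, v)
  odd : Odd k
  len : 3 ≤ k
  φ_inj : Function.Injective φ
  ψ_inj : Function.Injective ψ
  p_inj : Function.Injective p
  q_inj : Function.Injective q
  ψ_ends : ∀ f, H.ends (ψ f) = (G.ends f.1).map φ
  p_first : p 0 = φ u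
  p_last : p (Fin.last k) = φ v
  q_ends : ∀ i : Fin k, H.ends (q i) = s(p i.castSucc, p i.succ)
  internal_new : ∀ i : Fin (k + 1), i ≠ 0 → i ≠ Fin.last k → p i ∉ Set.range φ
  internal_deg : ∀ i : Fin (k + 1), i ≠ 0 → i ≠ Fin.last k → H.degree (p i) = 2
  v_cover : Set.range φ ∪ Set.range p = Set.univ
  e_cover : Set.range ψ ∪ Set.range q = Set.univ
  ψq_disj : ∀ f i, ψ f ≠ q i

/-- `H` is a bisubdivision of `G` at the edge `e`. -/
def IsBisubdivisionAt (H G : Multigraph) (e : G.E) : Prop :=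
  Nonempty (BisubWitness H G e)

end Multigraph

/-!
Perfect matchings of `H` pull back to perfect matchings of `G`: the edges of the odd path that
replaces `e` alternate in and out of a perfect matching, so its first and last edges are
matched together and can both be read as `e`. Connectivity passes from `H` to `G` along the
projection that collapses the path onto the edge `e`.
-/

theorem ExistsUnique.of_injective {α β : Type*} {p : α → Prop} {q : β → Prop} {f : α → β}
    (h : ∃! b, q b) (hf : Function.Injective f) (hpq : ∀ a, p a ↔ q (f a))
    (hq : ∀ b, q b → b ∈ Set.range f) : ∃! a, p a := by
  obtain ⟨b, hb, huniq⟩ := h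
  obtain ⟨a, rfl⟩ := hq b hb
  exact ⟨a, (hpq a).2 hb, fun a' ha' => hf (huniq _ ((hpq a').1 ha'))⟩

theorem Fin.iff_even_iff_of_succ_iff_not {n : ℕ} {P : Fin n → Prop}
    (hP : ∀ (j : ℕ) (hj : j + 1 < n), P ⟨j + 1, hj⟩ ↔ ¬ P ⟨j, by omega⟩) :
    ∀ (j : ℕ) (hj : j < n), P ⟨j, hj⟩ ↔ (Even j ↔ P ⟨0, by omega⟩)
  | 0, _ => by simp
  | j + 1, hj => by
    rw [hP j hj, Fin.iff_even_iff_of_succ_iff_not hP j (by omega), Nat.even_add_one]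
    tauto

namespace Multigraph

variable {G H : Multigraph}

theorem adj_of_ends_eq {f : G.E} {x y : G.V} (h : G.ends f = s(x, y)) : G.Adj x y := by
  refine ⟨fun hxy => G.no_loops f ?_, f, h⟩
  rw [h, Sym2.mk_isDiag_iff]
  exact hxy

theorem Connected.of_map_ends (hH : H.Connected) (π : H.V → G.V)
    (hπ : Function.Surjective π)
    (hends : ∀ g, (H.ends g).map π ∈ Set.range G.ends ∨ ((H.ends g).map π).IsDiag) :
    G.Connected := by
  have hadj : ∀ a b, H.Adj a b → Relation.ReflTransGen G.Adj (π a) (π b) := by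
    rintro a b ⟨-, g, hg⟩
    rcases hends g with ⟨f, hf⟩ | hdiag
    · rw [hg, Sym2.map_mk] at hf
      exact .single (adj_of_ends_eq hf)
    · rw [hg, Sym2.map_mk, Sym2.mk_isDiag_iff] at hdiag
      rw [hdiag]
  refine ⟨hH.1.map π, fun x y => ?_⟩
  obtain ⟨a, rfl⟩ := hπ x
  obtain ⟨b, rfl⟩ := hπ y
  exact (hH.2 a b).lift' π hadj

theorem IsPerfectMatching.mem_iff_notMem {M : Set G.E} (hM : G.IsPerfectMatching M)
    {x : G.V} {g₁ g₂ : G.E} (hne : g₁ ≠ g₂) (hinc : ∀ g, G.Inc x g ↔ g = g₁ ∨ g = g₂) :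
    g₂ ∈ M ↔ g₁ ∉ M := by
  obtain ⟨g, ⟨hgM, hgx⟩, huniq⟩ := hM x
  have h₁ := huniq g₁
  have h₂ := huniq g₂
  simp only [hinc, true_or, or_true, and_true] at h₁ h₂
  rcases (hinc g).1 hgx with rfl | rfl
  · exact ⟨fun h => absurd (h₂ h) hne.symm, fun h => absurd hgM h⟩
  · exact ⟨fun _ h => hne (h₁ h), fun _ => hgM⟩

namespace BisubWitness

variable {e : G.E} (W : BisubWitness H G e)

theorem k_pos : 0 < W.k := by
  have := W.len
  omega

theorem u_ne_v : W.u ≠ W.v := by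
  have h := G.no_loops e
  rwa [W.ends_e, Sym2.mk_isDiag_iff] at h

def firstEdge : H.E := W.q ⟨0, W.k_pos⟩

def lastEdge : H.E := W.q ⟨W.k - 1, by have := W.k_pos; omega⟩

theorem firstEdge_ne_lastEdge : W.firstEdge ≠ W.lastEdge := by
  intro h
  have := Fin.mk.inj_iff.1 (W.q_inj h)
  have := W.len
  omega

theorem exists_ψ_eq_or_exists_q_eq (g : H.E) : (∃ f, W.ψ f = g) ∨ (∃ i, W.q i = g) := by
  have hg : g ∈ Set.range W.ψ ∪ Set.range W.q := W.e_cover ▸ Set.mem_univ g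
  exact hg

theorem inc_ψ_iff {x : G.V} {f : {f : G.E // f ≠ e}} : H.Inc (W.φ x) (W.ψ f) ↔ G.Inc x f.1 := by
  simp only [Inc, W.ψ_ends, Sym2.mem_map, W.φ_inj.eq_iff, exists_eq_right]

theorem eq_zero_or_last_of_p_eq_φ {j : Fin (W.k + 1)} {x : G.V} (h : W.p j = W.φ x) :
    (j = 0 ∧ x = W.u) ∨ (j = Fin.last W.k ∧ x = W.v) := by
  by_cases h0 : j = 0
  · exact .inl ⟨h0, W.φ_inj (h ▸ h0 ▸ W.p_first)⟩
  by_cases hl : j = Fin.last W.k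
  · exact .inr ⟨hl, W.φ_inj (h ▸ hl ▸ W.p_last)⟩
  exact absurd ⟨x, h.symm⟩ (W.internal_new j h0 hl)

theorem eq_firstEdge_or_lastEdge_of_inc_φ {x : G.V} {i : Fin W.k} (h : H.Inc (W.φ x) (W.q i)) :
    (x = W.u ∧ W.q i = W.firstEdge) ∨ (x = W.v ∧ W.q i = W.lastEdge) := by
  rw [Inc, W.q_ends, Sym2.mem_iff] at h
  rcases h with h | h <;> rcases W.eq_zero_or_last_of_p_eq_φ h.symm with ⟨hi, hx⟩ | ⟨hi, hx⟩
  · refine .inl ⟨hx, congrArg W.q (Fin.ext ?_)⟩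
    simpa [Fin.ext_iff] using hi
  · exact absurd hi (Fin.castSucc_lt_last i).ne
  · exact absurd hi (Fin.succ_ne_zero i)
  · refine .inr ⟨hx, congrArg W.q (Fin.ext ?_)⟩
    simp only [Fin.ext_iff, Fin.val_succ, Fin.val_last] at hi
    show (i : ℕ) = W.k - 1
    omega

theorem inc_φ_firstEdge : H.Inc (W.φ W.u) W.firstEdge := by
  rw [Inc, firstEdge, W.q_ends, ← W.p_first]
  exact Sym2.mem_mk_left _ _

theorem inc_φ_lastEdge_iff {x : G.V} : H.Inc (W.φ x) W.lastEdge ↔ x = W.v := by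
  refine ⟨fun h => ?_, ?_⟩
  · rcases W.eq_firstEdge_or_lastEdge_of_inc_φ h with ⟨-, h⟩ | ⟨hx, -⟩
    · exact absurd h.symm W.firstEdge_ne_lastEdge
    · exact hx
  · rintro rfl
    rw [Inc, lastEdge, W.q_ends, ← W.p_last]
    convert Sym2.mem_mk_right _ _ using 2
    ext
    simp only [Fin.val_succ, Fin.val_last]
    have := W.k_pos
    omega

theorem inc_internal_iff {j : ℕ} (hj : j + 1 < W.k) {g : H.E} :
    H.Inc (W.p ⟨j + 1, by omega⟩) g ↔ g = W.q ⟨j, by omega⟩ ∨ g = W.q ⟨j + 1, hj⟩ := by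
  have h0 : (⟨j + 1, by omega⟩ : Fin (W.k + 1)) ≠ 0 := by simp [Fin.ext_iff]
  have hl : (⟨j + 1, by omega⟩ : Fin (W.k + 1)) ≠ Fin.last W.k := by
    simp only [ne_eq, Fin.ext_iff, Fin.val_last]
    omega
  constructor
  · intro h
    rcases W.exists_ψ_eq_or_exists_q_eq g with ⟨f, rfl⟩ | ⟨i, rfl⟩
    · rw [Inc, W.ψ_ends] at h
      obtain ⟨x, -, hx⟩ := Sym2.mem_map.mp h
      exact absurd ⟨x, hx⟩ (W.internal_new _ h0 hl)
    · rw [Inc, W.q_ends, Sym2.mem_iff] at h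
      rcases h with h | h <;> have hi := congrArg Fin.val (W.p_inj h) <;>
        simp only [Fin.val_castSucc, Fin.val_succ] at hi
      · exact .inr (congrArg W.q (Fin.ext hi.symm))
      · exact .inl (congrArg W.q (Fin.ext (show (i : ℕ) = j by omega)))
  · rintro (rfl | rfl) <;> rw [Inc, W.q_ends]
    · exact Sym2.mem_mk_right _ _
    · exact Sym2.mem_mk_left _ _

theorem q_mem_iff {M : Set H.E} (hM : H.IsPerfectMatching M) {j : ℕ} (hj : j < W.k) :
    W.q ⟨j, hj⟩ ∈ M ↔ (Even j ↔ W.firstEdge ∈ M) := by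
  refine Fin.iff_even_iff_of_succ_iff_not (P := (W.q · ∈ M)) (fun j hj => ?_) j hj
  refine hM.mem_iff_notMem (fun h => ?_) (fun _ => W.inc_internal_iff hj)
  have := Fin.mk.inj_iff.1 (W.q_inj h)
  omega

theorem lastEdge_mem_iff {M : Set H.E} (hM : H.IsPerfectMatching M) :
    W.lastEdge ∈ M ↔ W.firstEdge ∈ M := by
  have heven : Even (W.k - 1) := W.odd.tsub_odd odd_one
  rw [lastEdge, W.q_mem_iff hM]
  tauto

open Classical in
/-- `edgeAt x` identifies the edges of `G` at `x` with the edges of `H` at `φ x`. -/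
noncomputable def edgeAt (x : G.V) (f : G.E) : H.E :=
  if h : f = e then (if x = W.u then W.firstEdge else W.lastEdge) else W.ψ ⟨f, h⟩

theorem edgeAt_injective (x : G.V) : Function.Injective (W.edgeAt x) := by
  intro f₁ f₂ h
  by_cases h₁ : f₁ = e <;> by_cases h₂ : f₂ = e
  · exact h₁.trans h₂.symm
  all_goals
    unfold edgeAt firstEdge lastEdge at h
    split_ifs at h <;>
      first
      | exact absurd h.symm (W.ψq_disj _ _)
      | exact absurd h (W.ψq_disj _ _)
      | exact congrArg Subtype.val (W.ψ_inj h)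

theorem inc_edgeAt_iff {x : G.V} {f : G.E} : H.Inc (W.φ x) (W.edgeAt x f) ↔ G.Inc x f := by
  unfold edgeAt
  split_ifs with hf hx
  · subst hf hx
    exact iff_of_true W.inc_φ_firstEdge (by rw [Inc, W.ends_e]; exact Sym2.mem_mk_left _ _)
  · subst hf
    rw [W.inc_φ_lastEdge_iff, Inc, W.ends_e, Sym2.mem_iff]
    tauto
  · exact W.inc_ψ_iff

theorem mem_range_edgeAt {x : G.V} {g : H.E} (h : H.Inc (W.φ x) g) :
    g ∈ Set.range (W.edgeAt x) := by
  rcases W.exists_ψ_eq_or_exists_q_eq g with ⟨f, rfl⟩ | ⟨i, rfl⟩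
  · exact ⟨f.1, dif_neg f.2⟩
  · refine ⟨e, ?_⟩
    rcases W.eq_firstEdge_or_lastEdge_of_inc_φ h with ⟨hx, hi⟩ | ⟨hx, hi⟩
    · rw [edgeAt, dif_pos rfl, if_pos hx, hi]
    · rw [edgeAt, dif_pos rfl, if_neg (hx ▸ W.u_ne_v.symm), hi]

theorem edgeAt_mem_iff {M : Set H.E} (hM : H.IsPerfectMatching M) (x : G.V) (f : G.E) :
    W.edgeAt x f ∈ M ↔ W.edgeAt W.u f ∈ M := by
  unfold edgeAt
  rw [if_pos rfl]
  split_ifs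
  exacts [Iff.rfl, W.lastEdge_mem_iff hM, Iff.rfl]

theorem isPerfectMatching_preimage_edgeAt {M : Set H.E} (hM : H.IsPerfectMatching M) :
    G.IsPerfectMatching (W.edgeAt W.u ⁻¹' M) := fun x =>
  (hM (W.φ x)).of_injective (W.edgeAt_injective x)
    (fun f => by rw [Set.mem_preimage, ← W.edgeAt_mem_iff hM x, W.inc_edgeAt_iff])
    (fun _ hg => W.mem_range_edgeAt hg.2)

noncomputable def proj : H.V → G.V := Function.extend W.φ id fun _ => W.u

theorem proj_φ (x : G.V) : W.proj (W.φ x) = x :=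
  W.φ_inj.extend_apply id _ x

theorem proj_surjective : Function.Surjective W.proj := fun x => ⟨W.φ x, W.proj_φ x⟩

theorem proj_p (j : Fin (W.k + 1)) : W.proj (W.p j) = W.u ∨ W.proj (W.p j) = W.v := by
  by_cases h : ∃ x, W.φ x = W.p j
  · obtain ⟨x, hx⟩ := h
    rw [← hx, W.proj_φ]
    rcases W.eq_zero_or_last_of_p_eq_φ hx.symm with ⟨-, hx⟩ | ⟨-, hx⟩
    exacts [.inl hx, .inr hx]
  · exact .inl (Function.extend_apply' _ _ _ h)

theorem map_proj_ends (g : H.E) :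
    (H.ends g).map W.proj ∈ Set.range G.ends ∨ ((H.ends g).map W.proj).IsDiag := by
  rcases W.exists_ψ_eq_or_exists_q_eq g with ⟨f, rfl⟩ | ⟨i, rfl⟩
  · refine .inl ⟨f.1, ?_⟩
    rw [W.ψ_ends, Sym2.map_map, show W.proj ∘ W.φ = id from funext W.proj_φ, Sym2.map_id,
      id_eq]
  · rw [W.q_ends, Sym2.map_mk, Sym2.mk_isDiag_iff]
    rcases W.proj_p i.castSucc with h₁ | h₁ <;> rcases W.proj_p i.succ with h₂ | h₂ <;>
      rw [h₁, h₂]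
    · exact .inr rfl
    · exact .inl ⟨e, W.ends_e⟩
    · exact .inl ⟨e, W.ends_e.trans Sym2.eq_swap⟩
    · exact .inr rfl

end BisubWitness

end Multigraph

/-- If `H` is a bisubdivision of `G` at an edge `e` and `H` is matching covered,
then `G` is matching covered. -/
theorem bisubdivision_matching_covered
    (G H : Multigraph) (e : G.E) (hb : Multigraph.IsBisubdivisionAt H G e)
    (hH : H.MatchingCovered) : G.MatchingCovered := by
  obtain ⟨W⟩ := hb
  obtain ⟨-, hconn, hpm⟩ := hH
  refine ⟨Finite.one_lt_card_iff_nontrivial.2 (nontrivial_of_ne _ _ W.u_ne_v),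
    hconn.of_map_ends W.proj W.proj_surjective W.map_proj_ends, fun f => ?_⟩
  obtain ⟨M, hM, hf⟩ := hpm (W.edgeAt W.u f)
  exact ⟨_, W.isPerfectMatching_preimage_edgeAt hM, hf⟩
end

section
/- Let H be a bisubdivision of a graph G at an edge e = uv, obtained by replacing e with an odd path P of length at least 3, and suppose H is matching covered. Let X = V(P) \ {v}. Then ∂_H(X) is a tight cut of H. -/
open Multigraph

/-!
Double counting the incidences between `X` and the edges of a perfect matching `M` shows that
`|M ∩ ∂(X)| ≡ |X| (mod 2)`. Here `|X| = k` is odd. An internal vertex of `P` is incident only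
with path edges, and a path edge leaving `X` ends at `v`; so every edge of `∂(X)` is incident
with `u` or `v`. As `M` has exactly one edge at each of them, `|M ∩ ∂(X)| ≤ 2`, hence `= 1`.
-/

namespace Multigraph

variable {G : Multigraph}

lemma mem_cut_iff {X : Set G.V} {f : G.E} {a b : G.V} (hf : G.ends f = s(a, b)) :
    f ∈ G.cut X ↔ (a ∈ X ↔ b ∉ X) := by
  constructor
  · rintro ⟨x, hx, y, hy, hxy⟩
    rw [hf, Sym2.eq_iff] at hxy
    rcases hxy with ⟨rfl, rfl⟩ | ⟨rfl, rfl⟩ <;> tauto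
  · intro h
    by_cases ha : a ∈ X
    · exact ⟨a, ha, b, h.mp ha, hf⟩
    · exact ⟨b, not_not.mp (mt h.mpr ha), a, ha, hf.trans Sym2.eq_swap⟩

open Classical in
lemma cast_card_filter_inc (X : Set G.V) (f : G.E) :
    ((X.toFinset.filter (G.Inc · f)).card : ZMod 2) = if f ∈ G.cut X then 1 else 0 := by
  obtain ⟨a, b, hf⟩ := Sym2.exists_eq_mk (G.ends f)
  have hab : a ≠ b := fun h => G.no_loops f (by rw [hf, h]; exact Sym2.mk_isDiag_iff.mpr rfl)
  have hfilter : X.toFinset.filter (G.Inc · f) = ({a, b} : Finset G.V).filter (· ∈ X) := by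
    ext x
    simp only [Inc, hf, Finset.mem_filter, Set.mem_toFinset, Sym2.mem_iff, Finset.mem_insert,
      Finset.mem_singleton]
    tauto
  rw [hfilter, mem_cut_iff hf]
  by_cases ha : a ∈ X <;> by_cases hb : b ∈ X <;>
    simp [Finset.filter_insert, Finset.filter_singleton, ha, hb, hab]
  decide

open Classical in
lemma IsPerfectMatching.card_filter_inc {M : Set G.E} (hM : G.IsPerfectMatching M) (x : G.V) :
    (M.toFinset.filter (G.Inc x)).card = 1 := by
  obtain ⟨f, hf, huniq⟩ := hM x
  refine Finset.card_eq_one.mpr ⟨f, Finset.ext fun g => ?_⟩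
  simp only [Finset.mem_filter, Set.mem_toFinset, Finset.mem_singleton]
  exact ⟨huniq g, fun h => h ▸ hf⟩

lemma IsPerfectMatching.ncard_inter_cut_modEq {M : Set G.E} (hM : G.IsPerfectMatching M)
    (X : Set G.V) : (M ∩ G.cut X).ncard ≡ X.ncard [MOD 2] := by
  classical
  rw [← ZMod.natCast_eq_natCast_iff]
  have hcount : X.ncard = ∑ f ∈ M.toFinset, (X.toFinset.filter (G.Inc · f)).card := by
    rw [Set.ncard_eq_toFinset_card', Finset.card_eq_sum_ones,
      Finset.sum_congr rfl fun x _ => (hM.card_filter_inc x).symm]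
    exact Finset.sum_card_bipartiteAbove_eq_sum_card_bipartiteBelow (r := G.Inc)
  rw [hcount, Nat.cast_sum]
  simp_rw [cast_card_filter_inc]
  rw [Finset.sum_boole, Set.ncard_eq_toFinset_card', Set.toFinset_inter]
  congr 2
  ext f
  simp

lemma isTightCut_of_odd_of_mem_cut_inc {X : Set G.V} (hXc : Xᶜ.Nonempty) (hX : Odd X.ncard)
    {a b : G.V} (hcut : ∀ f ∈ G.cut X, G.Inc a f ∨ G.Inc b f) : G.IsTightCut X := by
  refine ⟨Set.nonempty_of_ncard_ne_zero hX.pos.ne', hXc, fun M hM => ?_⟩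
  obtain ⟨fa, hfa, hfa_uniq⟩ := hM a
  obtain ⟨fb, hfb, hfb_uniq⟩ := hM b
  have hsub : M ∩ G.cut X ⊆ {fa, fb} := fun f ⟨hfM, hf⟩ =>
    (hcut f hf).elim (fun h => Or.inl (hfa_uniq f ⟨hfM, h⟩))
      (fun h => Or.inr (hfb_uniq f ⟨hfM, h⟩))
  have hle : (M ∩ G.cut X).ncard ≤ 2 :=
    (Set.ncard_le_ncard hsub).trans ((Set.ncard_insert_le _ _).trans (by simp))
  have hodd : Odd (M ∩ G.cut X).ncard := by
    rw [Nat.odd_iff] at hX ⊢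
    rw [hM.ncard_inter_cut_modEq X, hX]
  have hone : (M ∩ G.cut X).ncard = 1 := by
    obtain ⟨m, hm⟩ := hodd
    omega
  obtain ⟨f, hf⟩ := Set.ncard_eq_one.mp hone
  have hmem : ∀ g, g ∈ M ∩ G.cut X ↔ g = f := fun g => by rw [hf, Set.mem_singleton_iff]
  exact ⟨f, (hmem f).mpr rfl, fun g hg => (hmem g).mp hg⟩

end Multigraph

namespace Multigraph.BisubWitness

variable {G H : Multigraph} {e : G.E} (W : BisubWitness H G e)

lemma range_p_diff_last :
    Set.range W.p \ {W.p (Fin.last W.k)} = Set.range (W.p ∘ Fin.castSucc) := by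
  ext x
  constructor
  · rintro ⟨⟨j, rfl⟩, hj⟩
    obtain ⟨i, rfl⟩ := Fin.exists_castSucc_eq.mpr fun h => hj (h ▸ rfl)
    exact ⟨i, rfl⟩
  · rintro ⟨i, rfl⟩
    exact ⟨⟨_, rfl⟩, fun h => Fin.castSucc_ne_last i (W.p_inj h)⟩

lemma ncard_range_p_diff_last : (Set.range W.p \ {W.p (Fin.last W.k)}).ncard = W.k := by
  rw [W.range_p_diff_last, Set.ncard_range_of_injective (W.p_inj.comp (Fin.castSucc_injective _)),
    Nat.card_eq_fintype_card, Fintype.card_fin]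

lemma exists_eq_q_of_p_mem_ends {j : Fin (W.k + 1)} (hj0 : j ≠ 0) (hjk : j ≠ Fin.last W.k)
    {f : H.E} (hf : W.p j ∈ H.ends f) : ∃ i, f = W.q i := by
  obtain ⟨g, rfl⟩ | ⟨i, rfl⟩ := W.e_cover.symm ▸ Set.mem_univ f
  · rw [W.ψ_ends] at hf
    obtain ⟨w, -, hw⟩ := Sym2.mem_map.mp hf
    exact absurd ⟨w, hw⟩ (W.internal_new j hj0 hjk)
  · exact ⟨i, rfl⟩

lemma inc_of_mem_cut {f : H.E} (hf : f ∈ H.cut (Set.range W.p \ {W.p (Fin.last W.k)})) :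
    H.Inc (W.p 0) f ∨ H.Inc (W.p (Fin.last W.k)) f := by
  obtain ⟨_, ⟨⟨j, rfl⟩, hj⟩, y, hy, hends⟩ := hf
  by_cases hj0 : j = 0
  · exact Or.inl (show W.p 0 ∈ H.ends f from hj0 ▸ hends ▸ Sym2.mem_mk_left _ _)
  right
  obtain ⟨i, rfl⟩ :=
    W.exists_eq_q_of_p_mem_ends hj0 (fun h => hj (h ▸ rfl)) (hends ▸ Sym2.mem_mk_left _ _)
  have hy_path : y ∈ Set.range W.p := by
    have : y ∈ H.ends (W.q i) := hends ▸ Sym2.mem_mk_right _ _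
    rw [W.q_ends, Sym2.mem_iff] at this
    exact this.elim (fun h => ⟨_, h.symm⟩) (fun h => ⟨_, h.symm⟩)
  have hy_last : y = W.p (Fin.last W.k) := by
    by_contra h
    exact hy ⟨hy_path, h⟩
  exact show W.p (Fin.last W.k) ∈ H.ends (W.q i) from hy_last ▸ hends ▸ Sym2.mem_mk_right _ _

end Multigraph.BisubWitness

theorem bisubdivision_path_cut_tight_general
    (G H : Multigraph) (e : G.E) (W : Multigraph.BisubWitness H G e) :
    H.IsTightCut (Set.range W.p \ {W.p (Fin.last W.k)}) :=
  isTightCut_of_odd_of_mem_cut_inc ⟨W.p (Fin.last W.k), fun h => h.2 rfl⟩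
    (by rw [W.ncard_range_p_diff_last]; exact W.odd) fun _ => W.inc_of_mem_cut

/-- If `H` is a bisubdivision of `G` at `e = uv` with subdividing path `P` and
`H` is matching covered, then `∂_H(V(P) \\ {v})` is a tight cut of `H`. -/
theorem bisubdivision_path_cut_tight
    (G H : Multigraph) (e : G.E) (W : Multigraph.BisubWitness H G e)
    (hH : H.MatchingCovered) :
    H.IsTightCut (Set.range W.p \ {W.p (Fin.last W.k)}) :=
  bisubdivision_path_cut_tight_general G H e W
end

section
/- Every brace on six or more vertices is 3-connected. -/
open Multigraph

/-!
Suppose `G - {u, v}` is disconnected and fix a proper 2-colouring `c` of the brace `G`. If every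
edge of `∂(X)` has its end in `X` of colour `t`, then following a perfect matching `M` from the
vertices of `X` gives `|X ∩ c⁻¹ t| = |X ∩ c⁻¹ (¬t)| + |M ∩ ∂(X)|`; so `|M ∩ ∂(X)|` is the same
for all `M`, and it is positive because some perfect matching uses an edge of the cut.

If `c u = c v`, this applies to a component `K` of `G - {u, v}` and to the union `Y` of the other
components. The edges of `M` in `∂(K)` and in `∂(Y)` are matching edges at `u` or `v`, so both
cuts are tight, hence `K` and `Y` are single vertices and `G` has at most four vertices.
If `c u ≠ c v`, it applies to `K + u` and to `K + v`, and the two identities add up to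
`|M ∩ ∂(K + u)| + |M ∩ ∂(K + v)| = 2`; so `∂(K + u)` is a tight cut with at least two
vertices on each side.
-/

namespace Multigraph

variable {G : Multigraph}

lemma ne_of_ends_eq {e : G.E} {p q : G.V} (h : G.ends e = s(p, q)) : p ≠ q := by
  rintro rfl
  exact G.no_loops e (h ▸ Sym2.mk_isDiag_iff.mpr rfl)

lemma inc_left_of_ends_eq {e : G.E} {p q : G.V} (h : G.ends e = s(p, q)) : G.Inc p e := by
  simp [Inc, h]

lemma inc_right_of_ends_eq {e : G.E} {p q : G.V} (h : G.ends e = s(p, q)) : G.Inc q e := by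
  simp [Inc, h]

lemma exists_mem_cut (hG : G.Connected) {X : Set G.V} {x y : G.V} (hx : x ∈ X) (hy : y ∉ X) :
    (G.cut X).Nonempty := by
  induction hG.2 x y with
  | refl => exact absurd hx hy
  | @tail p q _ hpq ih =>
    by_cases hp : p ∈ X
    · obtain ⟨-, e, he⟩ := hpq
      exact ⟨e, p, hp, q, hy, he⟩
    · exact ih hp

def IsProperColoring (c : G.V → Bool) : Prop :=
  ∀ (e : G.E) (a b : G.V), G.ends e = s(a, b) → c a ≠ c b

namespace IsPerfectMatching

variable {M : Set G.E} (hM : G.IsPerfectMatching M)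

noncomputable def edge (v : G.V) : G.E := (hM v).exists.choose

lemma edge_mem (v : G.V) : hM.edge v ∈ M := (hM v).exists.choose_spec.1

lemma inc_edge (v : G.V) : G.Inc v (hM.edge v) := (hM v).exists.choose_spec.2

lemma eq_edge {v : G.V} {e : G.E} (he : e ∈ M) (hv : G.Inc v e) : e = hM.edge v :=
  (hM v).unique ⟨he, hv⟩ ⟨hM.edge_mem v, hM.inc_edge v⟩

noncomputable def mate (v : G.V) : G.V := Sym2.Mem.other (hM.inc_edge v)

lemma ends_edge (v : G.V) : G.ends (hM.edge v) = s(v, hM.mate v) :=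
  (Sym2.other_spec _).symm

lemma mate_eq_of_ends_eq {e : G.E} {p q : G.V} (he : e ∈ M) (h : G.ends e = s(p, q)) :
    hM.mate p = q := by
  rw [← Sym2.congr_right, ← hM.ends_edge, ← hM.eq_edge he (inc_left_of_ends_eq h), h]

lemma mate_mate (v : G.V) : hM.mate (hM.mate v) = v :=
  hM.mate_eq_of_ends_eq (hM.edge_mem v) (by rw [hM.ends_edge, Sym2.eq_swap])

lemma mate_injective : Function.Injective hM.mate :=
  Function.LeftInverse.injective hM.mate_mate

lemma coloring_mate {c : G.V → Bool} (hc : G.IsProperColoring c) (v : G.V) :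
    c (hM.mate v) = !c v :=
  Bool.eq_not.mpr (hc _ _ _ (hM.ends_edge v)).symm

end IsPerfectMatching

lemma ncard_coloring_eq_add_ncard_inter_cut {c : G.V → Bool} (hc : G.IsProperColoring c)
    {M : Set G.E} (hM : G.IsPerfectMatching M) {X : Set G.V} {t : Bool}
    (hX : ∀ (e : G.E) (p q : G.V), G.ends e = s(p, q) → p ∈ X → q ∉ X → c p = t) :
    {x ∈ X | c x = t}.ncard = {x ∈ X | c x = !t}.ncard + (M ∩ G.cut X).ncard := by
  have hmate_mem : ∀ x ∈ X, c x = !t → hM.mate x ∈ X := fun x hx hcx => by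
    by_contra h
    simp [hX _ _ _ (hM.ends_edge x) hx h] at hcx
  -- inside `X`, `M` pairs the two colour classes; the rest of `X ∩ c⁻¹ t` is matched across `∂X`
  have hsplit :
      {x ∈ X | c x = t} = hM.mate '' {x ∈ X | c x = !t} ∪ {x ∈ X | hM.mate x ∉ X} := by
    ext x
    simp only [Set.mem_union, Set.mem_image, Set.mem_ofPred_eq]
    constructor
    · rintro ⟨hx, rfl⟩
      by_cases h : hM.mate x ∈ X
      · exact Or.inl ⟨hM.mate x, ⟨h, hM.coloring_mate hc x⟩, hM.mate_mate x⟩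
      · exact Or.inr ⟨hx, h⟩
    · rintro (⟨y, ⟨hy, hcy⟩, rfl⟩ | ⟨hx, h⟩)
      · exact ⟨hmate_mem y hy hcy, by rw [hM.coloring_mate hc, hcy, Bool.not_not]⟩
      · exact ⟨hx, hX _ _ _ (hM.ends_edge x) hx h⟩
  have hdisj : Disjoint (hM.mate '' {x ∈ X | c x = !t}) {x ∈ X | hM.mate x ∉ X} := by
    rw [Set.disjoint_left]
    rintro _ ⟨y, ⟨hy, -⟩, rfl⟩ ⟨-, h⟩
    exact h (by rwa [hM.mate_mate])
  have hcut : {x ∈ X | hM.mate x ∉ X}.ncard = (M ∩ G.cut X).ncard := by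
    refine Set.ncard_congr (fun x _ => hM.edge x)
      (fun x hx => ⟨hM.edge_mem x, x, hx.1, hM.mate x, hx.2, hM.ends_edge x⟩) ?_ ?_
    · intro x y hx hy hxy
      have hmem := hM.inc_edge x
      rw [Inc, hxy, hM.ends_edge, Sym2.mem_iff] at hmem
      refine hmem.resolve_right fun h => hx.2 ?_
      rw [h, hM.mate_mate]
      exact hy.1
    · rintro e ⟨he, p, hp, q, hq, hpq⟩
      exact ⟨p, ⟨hp, by rwa [hM.mate_eq_of_ends_eq he hpq]⟩,
        (hM.eq_edge he (inc_left_of_ends_eq hpq)).symm⟩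
  rw [hsplit, Set.ncard_union_eq hdisj, Set.ncard_image_of_injective _ hM.mate_injective, hcut]

lemma one_le_ncard_inter_cut (hG : G.MatchingCovered) {c : G.V → Bool}
    (hc : G.IsProperColoring c) {X : Set G.V} {t : Bool}
    (hX : ∀ (e : G.E) (p q : G.V), G.ends e = s(p, q) → p ∈ X → q ∉ X → c p = t)
    (hXne : X.Nonempty) (hXcne : Xᶜ.Nonempty) {M : Set G.E} (hM : G.IsPerfectMatching M) :
    1 ≤ (M ∩ G.cut X).ncard := by
  obtain ⟨e, he⟩ := exists_mem_cut hG.2.1 hXne.some_mem hXcne.some_mem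
  obtain ⟨M₀, hM₀, heM₀⟩ := hG.2.2 e
  have hpos : 0 < (M₀ ∩ G.cut X).ncard := (Set.ncard_pos).mpr ⟨e, heM₀, he⟩
  have h := ncard_coloring_eq_add_ncard_inter_cut hc hM hX
  have h₀ := ncard_coloring_eq_add_ncard_inter_cut hc hM₀ hX
  omega

lemma isTightCut_of_ncard_inter_cut_eq_one {X : Set G.V} (hXne : X.Nonempty) (hXcne : Xᶜ.Nonempty)
    (h : ∀ M, G.IsPerfectMatching M → (M ∩ G.cut X).ncard = 1) : G.IsTightCut X := by
  refine ⟨hXne, hXcne, fun M hM => ?_⟩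
  obtain ⟨e, he⟩ := Set.ncard_eq_one.mp (h M hM)
  refine ⟨e, show e ∈ M ∩ G.cut X from he ▸ rfl, fun f hf => ?_⟩
  simpa [he] using (show f ∈ M ∩ G.cut X from hf)

lemma TrivialShore.exists_eq_singleton {X : Set G.V} (hX : G.TrivialShore X) {p q : G.V}
    (hp : p ∉ X) (hq : q ∉ X) (hpq : p ≠ q) : ∃ z, X = {z} := by
  refine hX.resolve_right ?_
  rintro ⟨z, hz⟩
  have hp' : p ∈ Xᶜ := hp
  have hq' : q ∈ Xᶜ := hq
  rw [hz] at hp' hq'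
  exact hpq (hp'.trans hq'.symm)

lemma adj_deleteVerts {S : Set G.V} {e : G.E} {p q : G.V} (he : G.ends e = s(p, q))
    (hp : p ∉ S) (hq : q ∉ S) : (G.deleteVerts S).Adj ⟨p, hp⟩ ⟨q, hq⟩ := by
  have hmem : ∀ w ∈ G.ends e, w ∉ S := by
    intro w hw
    rw [he, Sym2.mem_iff] at hw
    rcases hw with rfl | rfl <;> assumption
  refine ⟨fun h => ne_of_ends_eq he (congrArg Subtype.val h), ⟨e, hmem⟩, ?_⟩
  apply Sym2.map.injective Subtype.val_injective
  change ((G.ends e).attachWith hmem).map Subtype.val = _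
  rw [Sym2.attachWith_map_subtypeVal, he]
  rfl

variable (G) in
def component {S : Set G.V} (a : (G.deleteVerts S).V) : Set G.V :=
  Subtype.val '' {z | Relation.ReflTransGen (G.deleteVerts S).Adj a z}

variable (G) in
def Separates (S X : Set G.V) : Prop :=
  Disjoint X S ∧ ∀ (e : G.E) (p q : G.V), G.ends e = s(p, q) → p ∈ X → q ∉ X → q ∈ S

lemma separates_component {S : Set G.V} (a : (G.deleteVerts S).V) :
    G.Separates S (G.component a) := by
  refine ⟨Set.disjoint_left.mpr ?_, fun e p q he hp hq => ?_⟩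
  · rintro _ ⟨z, -, rfl⟩
    exact z.2
  · obtain ⟨z, hz, rfl⟩ := hp
    by_contra hqS
    exact hq ⟨⟨q, hqS⟩, hz.tail (adj_deleteVerts he z.2 hqS), rfl⟩

lemma mem_component_iff {S : Set G.V} {a b : (G.deleteVerts S).V} :
    b.1 ∈ G.component a ↔ Relation.ReflTransGen (G.deleteVerts S).Adj a b := by
  refine ⟨?_, fun h => ⟨b, h, rfl⟩⟩
  rintro ⟨z, hz, hzb⟩
  rwa [← Subtype.ext hzb]

lemma Separates.notMem {S X : Set G.V} (h : G.Separates S X) {s : G.V} (hs : s ∈ S) : s ∉ X :=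
  fun hX => Set.disjoint_left.mp h.1 hX hs

lemma Separates.compl_union {S X : Set G.V} (h : G.Separates S X) : G.Separates S (X ∪ S)ᶜ := by
  refine ⟨Set.disjoint_left.mpr fun x hx hxS => hx (Or.inr hxS), fun e p q he hp hq => ?_⟩
  rcases not_not.mp hq with hqX | hqS
  · exact (hp (Or.inr (h.2 e q p (by rw [he, Sym2.eq_swap]) hqX fun hpX => hp (Or.inl hpX)))).elim
  · exact hqS

lemma ncard_inter_cut_add_ncard_inter_cut_le_two {M : Set G.E} (hM : G.IsPerfectMatching M)
    {u v : G.V} {X Y : Set G.V} (hX : G.Separates {u, v} X) (hY : G.Separates {u, v} Y)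
    (hXY : Disjoint X Y) : (M ∩ G.cut X).ncard + (M ∩ G.cut Y).ncard ≤ 2 := by
  have hsub : ∀ Z, G.Separates {u, v} Z → M ∩ G.cut Z ⊆ {hM.edge u, hM.edge v} := by
    rintro Z hZ e ⟨he, p, hp, q, hq, hpq⟩
    rcases hZ.2 e p q hpq hp hq with rfl | rfl
    · exact Or.inl (hM.eq_edge he (inc_right_of_ends_eq hpq))
    · exact Or.inr (hM.eq_edge he (inc_right_of_ends_eq hpq))
  have hdisj : Disjoint (M ∩ G.cut X) (M ∩ G.cut Y) := by
    rw [Set.disjoint_left]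
    rintro e ⟨-, p, hp, q, hq, hpq⟩ ⟨-, p', hp', q', hq', hpq'⟩
    rcases Sym2.eq_iff.mp (hpq.symm.trans hpq') with ⟨rfl, -⟩ | ⟨rfl, -⟩
    · exact Set.disjoint_left.mp hXY hp hp'
    · exact hX.notMem (hY.2 e _ _ hpq' hp' hq') hp
  calc (M ∩ G.cut X).ncard + (M ∩ G.cut Y).ncard
      = (M ∩ G.cut X ∪ M ∩ G.cut Y).ncard := (Set.ncard_union_eq hdisj).symm
    _ ≤ ({hM.edge u, hM.edge v} : Set G.E).ncard :=
        Set.ncard_le_ncard (Set.union_subset (hsub X hX) (hsub Y hY))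
    _ ≤ 2 := (Set.ncard_insert_le _ _).trans (by rw [Set.ncard_singleton])

lemma coloring_eq_not_of_separates {c : G.V → Bool} (hc : G.IsProperColoring c) {u v : G.V}
    (huv : c u = c v) {X : Set G.V} (hX : G.Separates {u, v} X) :
    ∀ (e : G.E) (p q : G.V), G.ends e = s(p, q) → p ∈ X → q ∉ X → c p = !c u := by
  intro e p q he hp hq
  rw [Bool.eq_not]
  rcases hX.2 e p q he hp hq with rfl | rfl
  · exact hc e p _ he
  · exact huv ▸ hc e p _ he

lemma one_le_ncard_inter_cut_of_separates (hG : G.MatchingCovered) {c : G.V → Bool}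
    (hc : G.IsProperColoring c) {u v : G.V} (hcuv : c u = c v) {Z : Set G.V}
    (hZ : G.Separates {u, v} Z) (hZne : Z.Nonempty) {M : Set G.E} (hM : G.IsPerfectMatching M) :
    1 ≤ (M ∩ G.cut Z).ncard :=
  one_le_ncard_inter_cut hG hc (coloring_eq_not_of_separates hc hcuv hZ) hZne
    ⟨u, hZ.notMem (Or.inl rfl)⟩ hM

lemma card_le_four_of_coloring_eq (hG : G.MatchingCovered)
    (htight : ∀ X, G.IsTightCut X → G.TrivialShore X) {c : G.V → Bool}
    (hc : G.IsProperColoring c) {u v : G.V} (huv : u ≠ v) (hcuv : c u = c v)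
    {a b : (G.deleteVerts {u, v}).V}
    (hab : ¬ Relation.ReflTransGen (G.deleteVerts {u, v}).Adj a b) :
    Nat.card G.V ≤ 4 := by
  classical
  set K := G.component a
  set Y := (K ∪ {u, v})ᶜ
  have hK : G.Separates {u, v} K := separates_component a
  have hY : G.Separates {u, v} Y := hK.compl_union
  have hKne : K.Nonempty := ⟨a.1, mem_component_iff.mpr .refl⟩
  have hYne : Y.Nonempty := ⟨b.1, fun h => h.elim (hab ∘ mem_component_iff.mp) b.2⟩
  have hsingleton : ∀ Z, G.Separates {u, v} Z → Z.Nonempty →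
      (∀ M, G.IsPerfectMatching M → (M ∩ G.cut Z).ncard ≤ 1) → ∃ z, Z = {z} :=
    fun Z hZ hZne h => (htight Z (isTightCut_of_ncard_inter_cut_eq_one hZne
      ⟨u, hZ.notMem (Or.inl rfl)⟩ fun M hM => (h M hM).antisymm
        (one_le_ncard_inter_cut_of_separates hG hc hcuv hZ hZne hM))).exists_eq_singleton
      (hZ.notMem (Or.inl rfl)) (hZ.notMem (Or.inr rfl)) huv
  have hle : ∀ M, G.IsPerfectMatching M →
      (M ∩ G.cut K).ncard ≤ 1 ∧ (M ∩ G.cut Y).ncard ≤ 1 := fun M hM => by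
    have := ncard_inter_cut_add_ncard_inter_cut_le_two hM hK hY
      (Set.disjoint_left.mpr fun x hx hx' => hx' (Or.inl hx))
    have := one_le_ncard_inter_cut_of_separates hG hc hcuv hK hKne hM
    have := one_le_ncard_inter_cut_of_separates hG hc hcuv hY hYne hM
    omega
  obtain ⟨a', ha'⟩ := hsingleton K hK hKne fun M hM => (hle M hM).1
  obtain ⟨b', hb'⟩ := hsingleton Y hY hYne fun M hM => (hle M hM).2
  have huniv : (Finset.univ : Finset G.V) ⊆ {a', u, v, b'} := by
    intro x _
    simp only [Finset.mem_insert, Finset.mem_singleton]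
    by_cases hxK : x ∈ K
    · rw [ha'] at hxK
      exact Or.inl hxK
    by_cases hxS : x ∈ ({u, v} : Set G.V)
    · exact Or.inr (hxS.imp_right Or.inl)
    have hxY : x ∈ Y := fun h => h.elim hxK hxS
    rw [hb'] at hxY
    exact Or.inr (Or.inr (Or.inr hxY))
  rw [Nat.card_eq_fintype_card, ← Finset.card_univ]
  exact (Finset.card_le_card huniv).trans Finset.card_le_four

lemma coloring_eq_of_separates_insert {c : G.V → Bool} (hc : G.IsProperColoring c)
    {u v : G.V} (huv : c u ≠ c v) {K : Set G.V} (hK : G.Separates {u, v} K) :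
    ∀ (e : G.E) (p q : G.V), G.ends e = s(p, q) → p ∈ insert u K → q ∉ insert u K →
      c p = c u := by
  rintro e p q he (rfl | hp) hq
  · rfl
  · obtain rfl : q = v :=
      (hK.2 e p q he hp fun h => hq (Or.inr h)).resolve_left fun h => hq (Or.inl h)
    exact (Bool.eq_not.mpr (hc e p q he)).trans (Bool.eq_not.mpr huv).symm

lemma ncard_coloring_add_one_eq_of_separates {c : G.V → Bool} (hc : G.IsProperColoring c)
    {u v : G.V} (huv : c u ≠ c v) {K : Set G.V} (hK : G.Separates {u, v} K) {M : Set G.E}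
    (hM : G.IsPerfectMatching M) :
    {x ∈ K | c x = c u}.ncard + 1 =
      {x ∈ K | c x = !c u}.ncard + (M ∩ G.cut (insert u K)).ncard := by
  have h := ncard_coloring_eq_add_ncard_inter_cut hc hM (coloring_eq_of_separates_insert hc huv hK)
  have hsame : {x ∈ insert u K | c x = c u} = insert u {x ∈ K | c x = c u} := by
    ext x
    by_cases hx : x = u <;> simp [hx]
  have hother : {x ∈ insert u K | c x = !c u} = {x ∈ K | c x = !c u} := by
    ext x
    by_cases hx : x = u <;> simp [hx]
  rwa [hsame, hother, Set.ncard_insert_of_notMem fun h => hK.notMem (Or.inl rfl) h.1] at h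

lemma one_le_ncard_inter_cut_insert (hG : G.MatchingCovered) {c : G.V → Bool}
    (hc : G.IsProperColoring c) {u v : G.V} (huv : c u ≠ c v) {K : Set G.V}
    (hK : G.Separates {u, v} K) {b : G.V} (hb : b ∉ insert u K) {M : Set G.E}
    (hM : G.IsPerfectMatching M) : 1 ≤ (M ∩ G.cut (insert u K)).ncard :=
  one_le_ncard_inter_cut hG hc (coloring_eq_of_separates_insert hc huv hK) ⟨u, Or.inl rfl⟩
    ⟨b, hb⟩ hM

lemma reach_of_coloring_ne (hG : G.MatchingCovered)
    (htight : ∀ X, G.IsTightCut X → G.TrivialShore X) {c : G.V → Bool}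
    (hc : G.IsProperColoring c) {u v : G.V} (huv : c u ≠ c v)
    (a b : (G.deleteVerts {u, v}).V) : Relation.ReflTransGen (G.deleteVerts {u, v}).Adj a b := by
  by_contra hab
  set K := G.component a
  have hK : G.Separates {u, v} K := separates_component a
  have hK' : G.Separates {v, u} K := Set.pair_comm u v ▸ hK
  have hbK : b.1 ∉ K := hab ∘ mem_component_iff.mp
  have hbu : b.1 ∉ insert u K := fun h => h.elim (fun h => b.2 (Or.inl h)) hbK
  have hbv : b.1 ∉ insert v K := fun h => h.elim (fun h => b.2 (Or.inr h)) hbK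
  have hsum : ∀ M, G.IsPerfectMatching M →
      (M ∩ G.cut (insert u K)).ncard + (M ∩ G.cut (insert v K)).ncard = 2 := fun M hM => by
    have hu := ncard_coloring_add_one_eq_of_separates hc huv hK hM
    have hv := ncard_coloring_add_one_eq_of_separates hc huv.symm hK' hM
    rw [(Bool.eq_not.mpr huv.symm).symm] at hu
    rw [(Bool.eq_not.mpr huv).symm] at hv
    omega
  have htc : G.IsTightCut (insert u K) :=
    isTightCut_of_ncard_inter_cut_eq_one ⟨u, Or.inl rfl⟩ ⟨b.1, hbu⟩ fun M hM => by
      have := hsum M hM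
      have := one_le_ncard_inter_cut_insert hG hc huv hK hbu hM
      have := one_le_ncard_inter_cut_insert hG hc huv.symm hK' hbv hM
      omega
  have hvu : v ∉ insert u K := fun h => h.elim (fun h => huv (h ▸ rfl)) (hK.notMem (Or.inr rfl))
  obtain ⟨z, hz⟩ := (htight _ htc).exists_eq_singleton hbu hvu fun h => b.2 (Or.inr h)
  have ha : a.1 ∈ insert u K := Or.inr (mem_component_iff.mpr .refl)
  have hu : u ∈ insert u K := Or.inl rfl
  rw [hz] at ha hu
  exact a.2 (Or.inl (ha.trans hu.symm))

end Multigraph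

/-- Every brace on six or more vertices is 3-connected. -/
theorem brace_three_connected
    (G : Multigraph) (hG : G.IsBrace) (h6 : 6 ≤ Nat.card G.V) :
    G.ThreeConnected := by
  obtain ⟨hmc, ⟨c, hc⟩, htight⟩ := hG
  refine ⟨by omega, fun u v huv => ⟨?_, fun a b => ?_⟩⟩
  · have hlt : ({u, v} : Set G.V).ncard < (Set.univ : Set G.V).ncard := by
      rw [Set.ncard_pair huv, Set.ncard_univ]
      omega
    obtain ⟨z, -, hz⟩ := Set.exists_mem_notMem_of_ncard_lt_ncard hlt
    exact ⟨⟨z, hz⟩⟩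
  · by_cases hcuv : c u = c v
    · by_contra hab
      have := card_le_four_of_coloring_eq hmc htight hc huv hcuv hab
      omega
    · exact reach_of_coloring_ne hmc htight hc hcuv a b
end
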